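/- arXiv:2304.02405 — 2 statements merged into one kernel-verified Lean document; each statement's English description precedes it below -/
import Mathlib

section
/- Let V : ℝ³ → [0,∞) be integrable with supp(V) ⊂ B_R(0), and let V_ℓ(x) = ℓ²V(ℓx). Then there is a constant C (depending only on ∫V and R) such that for every f ∈ H¹(Λ), where Λ = [-1/2,1/2]³ and ℓ ≥ 1: ∫_{Λ²} V_ℓ(x-y) |f(x) - f(y)|² dx dy ≤ C ℓ^{-3} ‖∇f‖²_{L²(Λ)}. -/
open MeasureTheory
open scoped ENNReal

/-- Euclidean norm on `Fin 3 → ℝ`. -/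
noncomputable def enorm3 (x : Fin 3 → ℝ) : ℝ := Real.sqrt (∑ i, x i ^ 2)

/-- The unit cube `Λ = [-1/2, 1/2]³`. -/
def cube : Set (Fin 3 → ℝ) := Set.Icc (fun _ => -(1 / 2 : ℝ)) (fun _ => (1 / 2 : ℝ))

/-- Partial derivative in the `i`-th coordinate direction. -/
noncomputable def pder (i : Fin 3) (f : (Fin 3 → ℝ) → ℝ) (x : Fin 3 → ℝ) : ℝ :=
  deriv (fun t => f (Function.update x i t)) (x i)

lemma pder_eq {f : (Fin 3 → ℝ) → ℝ} (hf : Differentiable ℝ f) (i : Fin 3) (x : Fin 3 → ℝ) :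
    pder i f x = fderiv ℝ f x (Pi.single i 1) := by
  have h2 : HasDerivAt (fun t : ℝ => f (Function.update x i t))
      (fderiv ℝ f (Function.update x i (x i)) (Pi.single i 1)) (x i) :=
    (hf _).hasFDerivAt.comp_hasDerivAt (x i) (hasDerivAt_update x i (x i))
  rw [Function.update_eq_self] at h2
  exact h2.deriv

lemma clm_apply_eq_sum (L : (Fin 3 → ℝ) →L[ℝ] ℝ) (v : Fin 3 → ℝ) :
    L v = ∑ i, v i * L (Pi.single i 1) := by
  have hv : v = ∑ i, v i • (Pi.single i (1:ℝ) : Fin 3 → ℝ) := by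
    funext j
    simp [Finset.sum_apply, Pi.single_apply]
  conv_lhs => rw [hv]
  rw [map_sum]
  simp [smul_eq_mul]

lemma pder_continuous {f : (Fin 3 → ℝ) → ℝ} (hf : ContDiff ℝ 1 f) (i : Fin 3) :
    Continuous (pder i f) := by
  have h : pder i f = fun u => fderiv ℝ f u (Pi.single i 1) :=
    funext (pder_eq (hf.differentiable one_ne_zero) i)
  rw [h]
  exact (hf.continuous_fderiv one_ne_zero).clm_apply continuous_const

lemma sq_setInt_le {h : ℝ → ℝ} (hc : Continuous h) :
    (∫ t in Set.Icc (0:ℝ) 1, h t) ^ 2 ≤ ∫ t in Set.Icc (0:ℝ) 1, (h t) ^ 2 := by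
  set μ : Measure ℝ := volume.restrict (Set.Icc (0:ℝ) 1)
  have hμ : μ Set.univ = 1 := by
    simp [μ, Measure.restrict_apply, Real.volume_Icc]
  have hh : Integrable h μ := hc.integrableOn_Icc
  have hh2 : Integrable (fun t => (h t)^2) μ := (hc.pow 2).integrableOn_Icc
  set c : ℝ := ∫ t, h t ∂μ with hc'
  have h0 : 0 ≤ ∫ t, (h t - c)^2 ∂μ := integral_nonneg (fun t => sq_nonneg _)
  have hexp : ∫ t, (h t - c)^2 ∂μ = (∫ t, (h t)^2 ∂μ) - 2*c*c + c^2 := by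
    have : ∀ t, (h t - c)^2 = (h t)^2 - (2*c) * h t + c^2 := by intro t; ring
    simp_rw [this]
    rw [integral_add (f := fun t => h t ^ 2 - 2*c*h t) (g := fun _ => c^2)
        (hh2.sub (hh.const_mul (2*c))) (integrable_const _),
      integral_sub (f := fun t => h t ^ 2) (g := fun t => 2*c*h t) hh2 (hh.const_mul (2*c)),
      integral_const_mul, integral_const]
    simp [Measure.real, hμ, hc']
  nlinarith [h0, hexp]

lemma key_pointwise {f : (Fin 3 → ℝ) → ℝ} (hf : ContDiff ℝ 1 f) (x y : Fin 3 → ℝ) :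
    (f x - f y) ^ 2 ≤ (∑ i, (x i - y i)^2) *
      ∫ t in Set.Icc (0:ℝ) 1, ∑ i, (pder i f (y + t • (x - y))) ^ 2 := by
  set p : ℝ → (Fin 3 → ℝ) := fun t => y + t • (x - y) with hp
  have hpc : Continuous p := by continuity
  set D : ℝ → ℝ := fun t => fderiv ℝ f (p t) (x - y) with hD'
  have hD : ∀ t : ℝ, HasDerivAt (fun s => f (p s)) (D t) t := by
    intro t
    have h1 : HasDerivAt p (x - y) t := by
      simpa only [id_eq, one_smul] using ((hasDerivAt_id t).smul_const (x - y)).const_add y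
    exact ((hf.differentiable one_ne_zero _).hasFDerivAt.comp_hasDerivAt t h1)
  have hDc : Continuous D :=
    ((hf.continuous_fderiv one_ne_zero).comp hpc).clm_apply continuous_const
  have hftc : ∫ t in (0:ℝ)..1, D t = f x - f y := by
    have := intervalIntegral.integral_eq_sub_of_hasDerivAt
      (f := fun s => f (p s)) (f' := D) (a := (0:ℝ)) (b := 1)
      (fun t _ => hD t) (hDc.intervalIntegrable 0 1)
    rw [this]
    simp [hp]
  have hIcc : ∫ t in Set.Icc (0:ℝ) 1, D t = f x - f y := by
    rw [MeasureTheory.integral_Icc_eq_integral_Ioc, ← intervalIntegral.integral_of_le zero_le_one,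
      hftc]
  set G : (Fin 3 → ℝ) → ℝ := fun u => ∑ i, (pder i f u) ^ 2 with hG
  have hGc : Continuous G := by
    apply continuous_finset_sum
    intro i _
    exact (pder_continuous hf i).pow 2
  have hptw : ∀ t : ℝ, (D t)^2 ≤ (∑ i, (x i - y i)^2) * G (p t) := by
    intro t
    have h1 : D t = ∑ i, (x i - y i) * pder i f (p t) := by
      show (fderiv ℝ f (p t)) (x - y) = _
      rw [clm_apply_eq_sum]
      congr 1
      funext i
      rw [pder_eq (hf.differentiable one_ne_zero)]
      simp [Pi.sub_apply]
    rw [h1]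
    exact Finset.sum_mul_sq_le_sq_mul_sq _ _ _
  calc (f x - f y)^2 = (∫ t in Set.Icc (0:ℝ) 1, D t)^2 := by rw [hIcc]
    _ ≤ ∫ t in Set.Icc (0:ℝ) 1, (D t)^2 := sq_setInt_le hDc
    _ ≤ ∫ t in Set.Icc (0:ℝ) 1, (∑ i, (x i - y i)^2) * G (p t) := by
        apply setIntegral_mono_on ((hDc.pow 2).integrableOn_Icc)
          ((continuous_const.mul (hGc.comp hpc)).integrableOn_Icc) measurableSet_Icc
        intro t _
        exact hptw t
    _ = (∑ i, (x i - y i)^2) * ∫ t in Set.Icc (0:ℝ) 1, G (p t) := integral_const_mul _ _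

lemma real_le_toReal_lintegral {α : Type*} [MeasurableSpace α] (μ : Measure α) (g : α → ℝ)
    (hg : ∀ x, 0 ≤ g x) :
    ∫ x, g x ∂μ ≤ (∫⁻ x, ENNReal.ofReal (g x) ∂μ).toReal := by
  by_cases hi : Integrable g μ
  · rw [← ofReal_integral_eq_lintegral_ofReal hi (ae_of_all _ hg),
      ENNReal.toReal_ofReal (integral_nonneg hg)]
  · rw [integral_undef hi]; exact ENNReal.toReal_nonneg

lemma ofReal_integral_le {α : Type*} [MeasurableSpace α] (μ : Measure α) (g : α → ℝ)
    (hg : ∀ x, 0 ≤ g x) :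
    ENNReal.ofReal (∫ x, g x ∂μ) ≤ ∫⁻ x, ENNReal.ofReal (g x) ∂μ := by
  by_cases hi : Integrable g μ
  · exact le_of_eq (ofReal_integral_eq_lintegral_ofReal hi (ae_of_all _ hg))
  · rw [integral_undef hi]; simp

lemma enorm3_smul {ℓ : ℝ} (hl : 0 ≤ ℓ) (z : Fin 3 → ℝ) : enorm3 (ℓ • z) = ℓ * enorm3 z := by
  unfold enorm3
  have : ∀ i : Fin 3, (ℓ • z) i ^ 2 = ℓ^2 * z i ^ 2 := by intro i; simp [Pi.smul_apply]; ring
  simp_rw [this, ← Finset.mul_sum]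
  rw [Real.sqrt_mul (sq_nonneg ℓ), Real.sqrt_sq hl]

lemma sum_sq_eq_enorm3_sq (z : Fin 3 → ℝ) : ∑ i, z i ^ 2 = enorm3 z ^ 2 := by
  rw [enorm3, Real.sq_sqrt]
  exact Finset.sum_nonneg fun i _ => sq_nonneg _

/-- Quadratic convolution bound: for `V ≥ 0` integrable with `supp V ⊆ B_R(0)` and
`V_ℓ(x) = ℓ²V(ℓx)`, one has
`∫∫_{Λ²} V_ℓ(x-y)|f(x)-f(y)|² dx dy ≤ C ℓ^{-3} ‖∇f‖²_{L²(Λ)}`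
with `C` depending only on `∫V` and `R`. -/
theorem quadratic_convolution_bound (V : (Fin 3 → ℝ) → ℝ) (R : ℝ) (hR : 0 < R)
    (hV_nonneg : ∀ x, 0 ≤ V x)
    (hV_int : Integrable V)
    (hV_supp : ∀ x, R < enorm3 x → V x = 0) :
    ∃ C : ℝ, 0 < C ∧ ∀ ℓ : ℝ, 1 ≤ ℓ → ∀ f : (Fin 3 → ℝ) → ℝ, ContDiff ℝ 1 f →
      ∫ x in cube, ∫ y in cube, ℓ ^ 2 * V (ℓ • (x - y)) * (f x - f y) ^ 2 ≤
        C / ℓ ^ 3 * ∫ x in cube, ∑ i, (pder i f x) ^ 2 := by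
  have hI3nn : 0 ≤ ∫ x, V x := integral_nonneg hV_nonneg
  set I3 : ℝ := ∫ x, V x with hI3
  refine ⟨R^2 * I3 + 1, by positivity, ?_⟩
  intro ℓ hℓ f hf
  set C : ℝ := R^2 * I3 + 1 with hC
  have hℓ0 : (0:ℝ) < ℓ := lt_of_lt_of_le one_pos hℓ
  -- basic objects
  set G : (Fin 3 → ℝ) → ℝ := fun u => ∑ i, (pder i f u)^2 with hGdef
  have hGc : Continuous G := continuous_finset_sum _ fun i _ => (pder_continuous hf i).pow 2
  have hGnn : ∀ u, 0 ≤ G u := fun u => Finset.sum_nonneg fun i _ => sq_nonneg _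
  set W : (Fin 3 → ℝ) → ℝ := fun z => ℓ^2 * V (ℓ • z) with hWdef
  have hWnn : ∀ z, 0 ≤ W z := fun z => mul_nonneg (sq_nonneg _) (hV_nonneg _)
  have hVl_int : Integrable (fun z : (Fin 3 → ℝ) => V (ℓ • z)) := hV_int.comp_smul (ne_of_gt hℓ0)
  have hW_int : Integrable W := hVl_int.const_mul _
  have hGint : IntegrableOn G cube := hGc.continuousOn.integrableOn_compact isCompact_Icc
  set JG : ℝ := ∫ u in cube, G u with hJG
  have hJGnn : 0 ≤ JG := integral_nonneg (fun u => hGnn u)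
  set Wb : (Fin 3 → ℝ) → ℝ≥0∞ := fun z => ENNReal.ofReal (W z) with hWb
  set Gb : (Fin 3 → ℝ) → ℝ≥0∞ := fun u => ENNReal.ofReal (G u) with hGb
  set κ : ℝ≥0∞ := ENNReal.ofReal ((R/ℓ)^2) with hκ
  set II : Set ℝ := Set.Icc (0:ℝ) 1 with hII
  set K : (Fin 3 → ℝ) → (Fin 3 → ℝ) → ℝ≥0∞ := fun x y => ∫⁻ t in II, Gb (y + t • (x - y)) with hK
  -- pointwise bound
  have step1 : ∀ x y : Fin 3 → ℝ, ENNReal.ofReal (W (x - y) * (f x - f y)^2)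
      ≤ κ * (Wb (x - y) * K x y) := by
    intro x y
    have hJnn : (0:ℝ) ≤ ∫ t in II, G (y + t • (x - y)) := integral_nonneg fun t => hGnn _
    have hJ : K x y = ENNReal.ofReal (∫ t in II, G (y + t • (x - y))) := by
      refine (ofReal_integral_eq_lintegral_ofReal ?_ (ae_of_all _ fun t => hGnn _)).symm
      exact (hGc.comp (by continuity)).integrableOn_Icc
    by_cases hz : enorm3 (ℓ • (x - y)) ≤ R
    · have h1 : enorm3 (x - y) ≤ R / ℓ := by
        rw [enorm3_smul hℓ0.le] at hz
        rw [le_div_iff₀ hℓ0, mul_comm]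
        exact hz
      have hS : (∑ i, (x i - y i)^2) ≤ (R/ℓ)^2 := by
        have h2 := sum_sq_eq_enorm3_sq (x - y)
        have h3 : ∑ i, (x i - y i)^2 = enorm3 (x - y) ^ 2 := by
          simpa [Pi.sub_apply] using h2
        rw [h3]
        exact pow_le_pow_left₀ (Real.sqrt_nonneg _) h1 2
      have hreal : W (x - y) * (f x - f y)^2
          ≤ W (x - y) * ((R/ℓ)^2 * ∫ t in II, G (y + t • (x - y))) := by
        apply mul_le_mul_of_nonneg_left _ (hWnn _)
        calc (f x - f y)^2 ≤ (∑ i, (x i - y i)^2) * ∫ t in II, G (y + t • (x - y)) :=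
              key_pointwise hf x y
          _ ≤ (R/ℓ)^2 * ∫ t in II, G (y + t • (x - y)) :=
              mul_le_mul_of_nonneg_right hS hJnn
      refine le_trans (ENNReal.ofReal_le_ofReal hreal) (le_of_eq ?_)
      simp only [hκ, hWb, hJ]
      rw [← ENNReal.ofReal_mul (hWnn _), ← ENNReal.ofReal_mul (sq_nonneg _)]
      exact congrArg _ (by ring)
    · have hV0 : V (ℓ • (x - y)) = 0 := hV_supp _ (lt_of_not_ge hz)
      have hW0 : W (x - y) = 0 := by simp [hWdef, hV0]
      simp [hW0]
  -- the main lintegral estimate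
  set T : ℝ≥0∞ := ∫⁻ x in cube, ∫⁻ y in cube, Wb (x - y) * K x y with hT
  have hGtot : ∫⁻ u in cube, Gb u = ENNReal.ofReal JG :=
    (ofReal_integral_eq_lintegral_ofReal hGint (ae_of_all _ fun u => hGnn u)).symm
  have step2 : T ≤ (∫⁻ z, Wb z) * ∫⁻ u in cube, Gb u := by
    classical
    have mcube : MeasurableSet cube := by unfold cube; exact measurableSet_Icc
    have mII : MeasurableSet II := by rw [hII]; exact measurableSet_Icc
    set χ : (Fin 3 → ℝ) → ℝ≥0∞ := fun u => Set.indicator cube (fun _ => (1:ℝ≥0∞)) u with hχ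
    have hχ_top : ∀ u, χ u ≠ ⊤ := by
      intro u; by_cases hu : u ∈ cube <;> simp [hχ, hu]
    have hχ_meas : Measurable χ := measurable_const.indicator mcube
    have hind : ∀ F : (Fin 3 → ℝ) → ℝ≥0∞, ∫⁻ u in cube, F u = ∫⁻ u, χ u * F u := by
      intro F
      rw [← lintegral_indicator mcube]
      congr 1; funext u
      by_cases hu : u ∈ cube <;> simp [Set.indicator, hχ, hu]
    set H : (Fin 3 → ℝ) → ℝ≥0∞ := fun u => χ u * Gb u with hH
    have hH_meas : Measurable H := hχ_meas.mul hGc.measurable.ennreal_ofReal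
    set M : (Fin 3 → ℝ) → (Fin 3 → ℝ) → ℝ≥0∞ :=
      fun x z => ∫⁻ t in II, H (x + (t - 1) • z) with hM
    have hM_meas : Measurable (fun p : (Fin 3 → ℝ) × (Fin 3 → ℝ) => M p.1 p.2) := by
      have hcont : Continuous (fun q : ((Fin 3 → ℝ) × (Fin 3 → ℝ)) × ℝ =>
          q.1.1 + (q.2 - 1) • q.1.2) :=
        (continuous_fst.comp continuous_fst).add
          (((continuous_snd.sub continuous_const)).smul (continuous_snd.comp continuous_fst))
      exact Measurable.lintegral_prod_right
        (f := fun (p : (Fin 3 → ℝ) × (Fin 3 → ℝ)) (t : ℝ) => H (p.1 + (t - 1) • p.2))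
        (hH_meas.comp hcont.measurable)
    have hsub : ∀ x : Fin 3 → ℝ,
        ∫⁻ y in cube, Wb (x - y) * K x y
          = ∫⁻ z, χ (x - z) * (Wb z * ∫⁻ t in II, Gb (x + (t - 1) • z)) := by
      intro x
      rw [hind]
      have hmp : MeasurePreserving (fun z : Fin 3 → ℝ => x - z) volume volume :=
        Measure.measurePreserving_sub_left volume x
      have hemb : MeasurableEmbedding (fun z : Fin 3 → ℝ => x - z) :=
        (MeasurableEquiv.subLeft x).measurableEmbedding
      rw [← hmp.lintegral_comp_emb hemb (fun y => χ y * (Wb (x - y) * K x y))]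
      refine lintegral_congr fun z => ?_
      simp only [hK, sub_sub_cancel]
      congr 2
      refine lintegral_congr fun t => ?_
      congr 1
      module
    have hTeq : T = ∫⁻ x, ∫⁻ z,
        χ x * (χ (x - z) * (Wb z * ∫⁻ t in II, Gb (x + (t - 1) • z))) := by
      rw [hT, hind]
      refine lintegral_congr fun x => ?_
      rw [hsub x, ← lintegral_const_mul' (χ x) _ (hχ_top x)]
    have hcube_convex : Convex ℝ cube := convex_Icc _ _
    have hptw : ∀ x z : Fin 3 → ℝ,
        χ x * (χ (x - z) * (Wb z * ∫⁻ t in II, Gb (x + (t - 1) • z)))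
          ≤ Wb z * M x z := by
      intro x z
      by_cases hx : x ∈ cube
      · by_cases hxz : x - z ∈ cube
        · have hχx : χ x = 1 := by simp [hχ, hx]
          have hχxz : χ (x - z) = 1 := by simp [hχ, hxz]
          rw [hχx, hχxz, one_mul, one_mul]
          refine mul_le_mul_right ?_ _
          refine setLIntegral_mono' mII fun t ht => ?_
          have hmem : x + (t - 1) • z ∈ cube := by
            have hc : t • x + (1 - t) • (x - z) ∈ cube :=
              hcube_convex hx hxz ht.1 (by linarith [ht.2]) (by ring)
            have heq : t • x + (1 - t) • (x - z) = x + (t - 1) • z := by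
              module
            rwa [heq] at hc
          simp [hH, hχ, hmem]
        · have h0 : χ (x - z) = 0 := by simp [hχ, hxz]
          simp [h0]
      · have h0 : χ x = 0 := by simp [hχ, hx]
        simp [h0]
    have hWb_aem : AEMeasurable Wb (volume : Measure (Fin 3 → ℝ)) :=
      hW_int.aemeasurable.ennreal_ofReal
    have haem : AEMeasurable
        (Function.uncurry fun (x z : Fin 3 → ℝ) => Wb z * M x z)
        ((volume : Measure (Fin 3 → ℝ)).prod volume) := by
      exact (hWb_aem.comp_quasiMeasurePreserving
        Measure.quasiMeasurePreserving_snd).mul hM_meas.aemeasurable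
    have hGtot_ne : (∫⁻ u in cube, Gb u) ≠ ⊤ := by
      rw [hGtot]; exact ENNReal.ofReal_ne_top
    have hMint : ∀ z : Fin 3 → ℝ, ∫⁻ x, M x z = ∫⁻ u in cube, Gb u := by
      intro z
      have haem2 : AEMeasurable
          (Function.uncurry fun (x : Fin 3 → ℝ) (t : ℝ) => H (x + (t - 1) • z))
          ((volume : Measure (Fin 3 → ℝ)).prod (volume.restrict II)) := by
        have hcont : Continuous (fun q : (Fin 3 → ℝ) × ℝ => q.1 + (q.2 - 1) • z) :=
          continuous_fst.add ((continuous_snd.sub continuous_const).smul continuous_const)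
        exact (hH_meas.comp hcont.measurable).aemeasurable
      calc ∫⁻ x, M x z = ∫⁻ t in II, ∫⁻ x, H (x + (t - 1) • z) :=
            lintegral_lintegral_swap haem2
        _ = ∫⁻ t in II, ∫⁻ u, H u := by
            refine lintegral_congr fun t => ?_
            exact lintegral_add_right_eq_self H ((t - 1) • z)
        _ = ∫⁻ u, H u := by
            rw [setLIntegral_const, hII, Real.volume_Icc]
            simp
        _ = ∫⁻ u in cube, Gb u := (hind Gb).symm
    calc T = ∫⁻ x, ∫⁻ z,
          χ x * (χ (x - z) * (Wb z * ∫⁻ t in II, Gb (x + (t - 1) • z))) := hTeq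
      _ ≤ ∫⁻ x, ∫⁻ z, Wb z * M x z :=
          lintegral_mono fun x => lintegral_mono fun z => hptw x z
      _ = ∫⁻ z, ∫⁻ x, Wb z * M x z := lintegral_lintegral_swap haem
      _ = ∫⁻ z, Wb z * ∫⁻ x, M x z :=
          lintegral_congr fun z => lintegral_const_mul' _ _ ENNReal.ofReal_ne_top
      _ = ∫⁻ z, Wb z * ∫⁻ u in cube, Gb u := by
          refine lintegral_congr fun z => ?_
          rw [hMint z]
      _ = (∫⁻ z, Wb z) * ∫⁻ u in cube, Gb u :=
          lintegral_mul_const' _ _ hGtot_ne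
  -- numbers
  have hWtot : ∫⁻ z, Wb z = ENNReal.ofReal (ℓ^2 * ((ℓ^3)⁻¹ * I3)) := by
    rw [← ofReal_integral_eq_lintegral_ofReal hW_int (ae_of_all _ hWnn)]
    congr 1
    rw [hWdef]
    rw [integral_const_mul]
    congr 1
    rw [MeasureTheory.Measure.integral_comp_smul volume V ℓ, Module.finrank_fin_fun,
      smul_eq_mul, abs_of_nonneg (by positivity), hI3]
  -- assembly
  have hA' : (∫⁻ x in cube, ENNReal.ofReal (∫ y in cube, W (x - y) * (f x - f y)^2))
      ≤ ENNReal.ofReal (C / ℓ^3 * JG) := by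
    calc ∫⁻ x in cube, ENNReal.ofReal (∫ y in cube, W (x - y) * (f x - f y)^2)
        ≤ ∫⁻ x in cube, ∫⁻ y in cube, κ * (Wb (x - y) * K x y) := by
          refine lintegral_mono fun x => ?_
          refine le_trans (ofReal_integral_le _ _ fun y => mul_nonneg (hWnn _) (sq_nonneg _)) ?_
          exact lintegral_mono fun y => step1 x y
      _ = κ * T := by
          simp_rw [lintegral_const_mul' κ _ ENNReal.ofReal_ne_top]
          rfl
      _ ≤ κ * ((∫⁻ z, Wb z) * ∫⁻ u in cube, Gb u) := mul_le_mul_right step2 κ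
      _ = ENNReal.ofReal ((R/ℓ)^2 * (ℓ^2 * ((ℓ^3)⁻¹ * I3) * JG)) := by
          rw [hWtot, hGtot, ← ENNReal.ofReal_mul (by positivity), ← ENNReal.ofReal_mul (by positivity)]
      _ ≤ ENNReal.ofReal (C / ℓ^3 * JG) := by
          apply ENNReal.ofReal_le_ofReal
          have heq : (R/ℓ)^2 * (ℓ^2 * ((ℓ^3)⁻¹ * I3) * JG) = (R^2 * I3) / ℓ^3 * JG := by
            field_simp
          rw [heq]
          apply mul_le_mul_of_nonneg_right _ hJGnn
          apply div_le_div_of_nonneg_right ?_ (by positivity)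
          rw [hC]
          linarith
  -- from ennreal to real
  show ∫ x in cube, (∫ y in cube, W (x - y) * (f x - f y)^2) ≤ C / ℓ^3 * JG
  have h1 : ∫ x in cube, (∫ y in cube, W (x - y) * (f x - f y)^2)
      ≤ (∫⁻ x in cube, ENNReal.ofReal (∫ y in cube, W (x - y) * (f x - f y)^2)).toReal :=
    real_le_toReal_lintegral _ _ (fun x => integral_nonneg fun y => mul_nonneg (hWnn _) (sq_nonneg _))
  refine h1.trans ?_
  have h2 := ENNReal.toReal_mono (by simp) hA'
  rw [ENNReal.toReal_ofReal (by positivity)] at h2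
  exact h2
end

section
/- Define g(p) = √(p⁴ + 16p²) − 8 − p² + 32/p² for p ∈ ℝ³ \ {0}, where p² = |p|² and p⁴ = |p|⁴. Then (1/2) ∫_{[0,∞)³} g(z) dz = 4π · 128/15. -/
open MeasureTheory

open Set NNReal ENNReal

lemma map_abs_volume : Measure.map (fun x : ℝ => |x|) volume
    = (2:ℝ≥0) • (volume : Measure ℝ).restrict (Set.Ici 0) := by
  refine Measure.ext fun s hs => ?_
  rw [Measure.map_apply measurable_abs hs, Measure.smul_apply, Measure.restrict_apply hs]
  have hpre : (fun x : ℝ => |x|) ⁻¹' s = (s ∩ Ici 0) ∪ (-(s ∩ Ioi 0)) := by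
    ext x
    simp only [Set.mem_preimage, Set.mem_union, Set.mem_inter_iff, Set.mem_Ici, Set.mem_Ioi,
      Set.mem_neg]
    rcases le_or_gt 0 x with hx | hx
    · rw [abs_of_nonneg hx]
      constructor
      · intro h; exact Or.inl ⟨h, hx⟩
      · rintro (⟨h, -⟩ | ⟨h, h2⟩)
        · exact h
        · have : x = 0 := le_antisymm (by linarith) hx
          simpa [this] using h
    · rw [abs_of_neg hx]
      constructor
      · intro h; exact Or.inr ⟨h, by linarith⟩
      · rintro (⟨h, h2⟩ | ⟨h, -⟩)
        · linarith
        · exact h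
  have hdisj : Disjoint (s ∩ Ici 0) (-(s ∩ Ioi 0)) := by
    rw [Set.disjoint_left]
    rintro x ⟨-, hx1⟩ hx2
    rw [Set.mem_neg] at hx2
    have : (0:ℝ) < -x := hx2.2
    simp only [Set.mem_Ici] at hx1
    linarith
  rw [hpre, measure_union hdisj ((hs.inter measurableSet_Ioi).neg)]
  have h1 : volume (-(s ∩ Ioi 0)) = volume (s ∩ Ioi 0) := Measure.measure_neg volume _
  have h2 : volume (s ∩ Ioi 0) = volume (s ∩ Ici 0) :=
    measure_congr ((Filter.EventuallyEq.refl _ s).inter Ioi_ae_eq_Ici)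
  rw [h1, h2, ENNReal.smul_def, smul_eq_mul, ENNReal.coe_ofNat, two_mul]

lemma map_abs_pi : Measure.map (fun (z : Fin 3 → ℝ) i => |z i|) volume
    = (8:ℝ≥0∞) • (volume : Measure (Fin 3 → ℝ)).restrict {z : Fin 3 → ℝ | ∀ i, 0 ≤ z i} := by
  have h0 : MeasurePreserving (fun (z : Fin 3 → ℝ) i => |z i|)
      (Measure.pi fun _ => volume) (Measure.pi fun _ : Fin 3 => (2:ℝ≥0) • volume.restrict (Set.Ici 0)) :=
    measurePreserving_pi _ _ (fun _ => ⟨measurable_abs, map_abs_volume⟩)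
  have h1 : Measure.pi (fun _ : Fin 3 => (2:ℝ≥0) • (volume : Measure ℝ).restrict (Set.Ici 0))
      = (8:ℝ≥0∞) • (volume : Measure (Fin 3 → ℝ)).restrict {z : Fin 3 → ℝ | ∀ i, 0 ≤ z i} := by
    refine Measure.pi_eq fun s hs => ?_
    have hocta : {z : Fin 3 → ℝ | ∀ i, 0 ≤ z i} = Set.pi Set.univ (fun _ => Set.Ici (0:ℝ)) := by
      ext z; simp only [Set.mem_setOf_eq, Set.mem_univ_pi, Set.mem_Ici]
    rw [Measure.smul_apply, hocta, Measure.restrict_apply (MeasurableSet.univ_pi hs),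
      ← Set.pi_inter_distrib, volume_pi_pi]
    simp only [Measure.smul_apply, Measure.restrict_apply (hs _), ENNReal.smul_def, smul_eq_mul]
    rw [Fin.prod_univ_three, Fin.prod_univ_three]
    push_cast
    ring
  calc Measure.map (fun (z : Fin 3 → ℝ) i => |z i|) volume
      = Measure.map (fun (z : Fin 3 → ℝ) i => |z i|) (Measure.pi fun _ => volume) := by
        rw [← volume_pi]
    _ = Measure.pi (fun _ : Fin 3 => (2:ℝ≥0) • volume.restrict (Set.Ici 0)) := h0.map_eq
    _ = _ := h1

noncomputable def Hfun (y : ℝ) : ℝ :=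
  (y^2+16)^2 * Real.sqrt (y^2+16) / 5 - 16*(y^2+16) * Real.sqrt (y^2+16) / 3
    - y^5/5 - 8*y^3/3 + 32*y

noncomputable def hfun (y : ℝ) : ℝ := y^3 * Real.sqrt (y^2+16) - y^4 - 8*y^2 + 32

lemma Hfun_deriv (y : ℝ) : HasDerivAt Hfun (hfun y) y := by
  have hqne : y^2+16 ≠ 0 := by positivity
  have hq : HasDerivAt (fun y : ℝ => y^2+16) (2*y) y := by
    simpa using (hasDerivAt_pow 2 y).add_const (16:ℝ)
  have hs : HasDerivAt (fun y : ℝ => Real.sqrt (y^2+16)) (2*y / (2*Real.sqrt (y^2+16))) y :=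
    hq.sqrt hqne
  have h1 : HasDerivAt (fun y : ℝ => (y^2+16)^2 * Real.sqrt (y^2+16))
      ((2*(y^2+16)*(2*y)) * Real.sqrt (y^2+16) + (y^2+16)^2 * (2*y / (2*Real.sqrt (y^2+16)))) y := by
    simpa [Pi.mul_def, Pi.pow_def, mul_comm, mul_assoc, mul_left_comm] using (hq.pow 2).mul hs
  have h2 : HasDerivAt (fun y : ℝ => 16*(y^2+16) * Real.sqrt (y^2+16))
      ((16*(2*y)) * Real.sqrt (y^2+16) + 16*(y^2+16) * (2*y / (2*Real.sqrt (y^2+16)))) y :=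
    (hq.const_mul (16:ℝ)).mul hs
  have h3 : HasDerivAt (fun y : ℝ => y^5) (5*y^4) y := by simpa using hasDerivAt_pow 5 y
  have h4 : HasDerivAt (fun y : ℝ => 8*y^3) (8*(3*y^2)) y := by
    simpa using (hasDerivAt_pow 3 y).const_mul (8:ℝ)
  have h5 : HasDerivAt (fun y : ℝ => 32*y) 32 y := by
    simpa using (hasDerivAt_id y).const_mul (32:ℝ)
  have := ((((h1.div_const 5).sub (h2.div_const 3)).sub (h3.div_const 5)).sub
      (h4.div_const 3)).add h5
  convert this using 1
  · rfl
  · rfl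
  · rfl
  have hs0 : Real.sqrt (y^2+16) ≠ 0 := by positivity
  have hs2 : y^2+16 = Real.sqrt (y^2+16) ^ 2 := (Real.sq_sqrt (by positivity)).symm
  unfold hfun
  set s := Real.sqrt (y^2+16) with hsdef
  rw [hs2]
  field_simp
  linear_combination (15*y*s) * hs2

lemma hfun_nonneg : ∀ y ∈ Ioi (0:ℝ), 0 ≤ hfun y := by
  intro y hy
  have hy : 0 < y := hy
  have hs2 : Real.sqrt (y^2+16) ^ 2 = y^2+16 := Real.sq_sqrt (by positivity)
  have hspos : 0 < Real.sqrt (y^2+16) := Real.sqrt_pos.2 (by positivity)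
  set s := Real.sqrt (y^2+16)
  unfold hfun
  rcases le_or_gt (y^4 + 8*y^2) 32 with hc | hc
  · nlinarith [mul_pos (pow_pos hy 3) hspos]
  · have ht : 2 < y^2 := by nlinarith
    have hA : 0 < y^3*s + (y^4+8*y^2-32) := by
      have := mul_pos (pow_pos hy 3) hspos
      nlinarith
    have hsq : (y^3*s)^2 - (y^4+8*y^2-32)^2 = 512*y^2 - 1024 := by
      linear_combination y^6 * hs2
    nlinarith [hsq, hA, ht]

lemma Hfun_zero : Hfun 0 = -(2048/15) := by
  have h4 : Real.sqrt ((0:ℝ)^2+16) = 4 := by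
    rw [show ((0:ℝ)^2+16) = 4^2 by norm_num, Real.sqrt_sq (by norm_num)]
  unfold Hfun
  rw [h4]
  norm_num

lemma Hfun_tendsto : Filter.Tendsto Hfun Filter.atTop (nhds 0) := by
  apply squeeze_zero_norm' (a := fun y : ℝ => 400 / y)
  · filter_upwards [Filter.eventually_ge_atTop (16:ℝ)] with y hy
    have hypos : (0:ℝ) < y := by linarith
    have h16 : (256:ℝ) ≤ y^2 := by nlinarith
    have h65536 : (65536:ℝ) ≤ y^4 := by nlinarith
    have hs2 : Real.sqrt (y^2+16) ^ 2 = y^2+16 := Real.sq_sqrt (by positivity)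
    have hspos : 0 < Real.sqrt (y^2+16) := Real.sqrt_pos.2 (by positivity)
    set s := Real.sqrt (y^2+16) with hsdef
    have hsy : y ≤ s := by nlinarith
    set A : ℝ := y*(3*y^2-32)*(y^2+16) with hAdef
    set B : ℝ := 3*y^6+40*y^4-480*y^2 with hBdef
    set N : ℝ := 4194304*y^2-230400*y^4-23040*y^6 with hNdef
    have hAB : 15*y*Hfun y = A*s - B := by unfold Hfun; rw [hAdef, hBdef, ← hsdef]; ring
    have hthis : (A*s - B)*(A*s+B) = N := by
      rw [hAdef, hBdef, hNdef]; linear_combination (y*(3*y^2-32)*(y^2+16))^2 * hs2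
    have hkey : Hfun y * (15*y*(A*s+B)) = N := by linear_combination (A*s+B)*hAB + hthis
    have hApos : 2*y^5 ≤ A := by
      rw [hAdef]; nlinarith [mul_le_mul_of_nonneg_right h16 (sq_nonneg y), pow_pos hypos 3]
    have hA0 : (0:ℝ) ≤ A := le_trans (by positivity) hApos
    have hBpos : 3*y^6 ≤ B := by
      rw [hBdef]; nlinarith [mul_le_mul_of_nonneg_right h16 (sq_nonneg y)]
    have hAs : 2*y^5*y ≤ A*s := mul_le_mul hApos hsy hypos.le hA0
    have h5 : 5*y^6 ≤ A*s+B := by nlinarith [hAs]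
    have hD : 75*y^7 ≤ 15*y*(A*s+B) := by
      nlinarith [mul_le_mul_of_nonneg_left h5 (by linarith : (0:ℝ) ≤ 15*y)]
    have hDpos : 0 < 15*y*(A*s+B) := lt_of_lt_of_le (by positivity) hD
    have hNbound : |N| ≤ 30000*y^6 := by
      rw [abs_le, hNdef]
      constructor
      · nlinarith [mul_le_mul_of_nonneg_right h16 (pow_nonneg hypos.le 4), sq_nonneg y]
      · nlinarith [mul_le_mul_of_nonneg_right h65536 (sq_nonneg y)]
    have hH : Hfun y = N / (15*y*(A*s+B)) := by
      rw [eq_div_iff hDpos.ne']; exact hkey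
    rw [hH, Real.norm_eq_abs, abs_div, abs_of_pos hDpos, div_le_div_iff₀ hDpos hypos]
    calc |N| * y ≤ 30000*y^6 * y := mul_le_mul_of_nonneg_right hNbound hypos.le
      _ = 400 * (75*y^7) := by ring
      _ ≤ 400 * (15*y*(A*s+B)) := by linarith
  · exact Filter.Tendsto.div_atTop tendsto_const_nhds Filter.tendsto_id

lemma radial_value :
    ∫ y in Ioi (0:ℝ), y ^ 2 • (Real.sqrt ((y^2) ^ 2 + 16 * (y^2)) - 8 - (y^2) + 32 / (y^2))
      = 2048/15 := by
  have hcongr : EqOn (fun y : ℝ => y ^ 2 • (Real.sqrt ((y^2) ^ 2 + 16 * (y^2)) - 8 - (y^2) + 32 / (y^2)))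
      hfun (Ioi 0) := by
    intro y hy
    have hy : (0:ℝ) < y := hy
    have hsq : Real.sqrt ((y^2)^2 + 16*y^2) = y * Real.sqrt (y^2+16) := by
      rw [show (y^2)^2 + 16*y^2 = y^2 * (y^2+16) by ring, Real.sqrt_mul (sq_nonneg y),
        Real.sqrt_sq hy.le]
    simp only [smul_eq_mul]
    unfold hfun
    rw [hsq]
    field_simp
    ring
  rw [setIntegral_congr_fun measurableSet_Ioi hcongr,
    integral_Ioi_of_hasDerivAt_of_nonneg (Hfun_deriv 0).continuousAt.continuousWithinAt
      (fun x _ => Hfun_deriv x) hfun_nonneg Hfun_tendsto, Hfun_zero]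
  norm_num

/-- The squared Euclidean norm `p² = |p|²` on `Fin 3 → ℝ`. -/
def nsq (p : Fin 3 → ℝ) : ℝ := ∑ i, p i ^ 2

lemma ball_vol : (volume (Metric.ball (0 : EuclideanSpace ℝ (Fin 3)) 1)).toReal
    = 4 * Real.pi / 3 := by
  have hΓ : Real.Gamma ((3:ℝ)/2 + 1) = 3/4 * Real.sqrt Real.pi := by
    rw [Real.Gamma_add_one (by norm_num), show (3:ℝ)/2 = 1/2 + 1 by norm_num,
      Real.Gamma_add_one (by norm_num), Real.Gamma_one_half_eq]
    ring
  rw [EuclideanSpace.volume_ball]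
  simp only [Fintype.card_fin, Nat.cast_ofNat, ENNReal.ofReal_one, one_pow, one_mul]
  rw [hΓ, ENNReal.toReal_ofReal (by positivity)]
  have hsp : Real.sqrt Real.pi ^ 2 = Real.pi := Real.sq_sqrt Real.pi_pos.le
  have hsp0 : Real.sqrt Real.pi ≠ 0 := by positivity
  field_simp
  linear_combination hsp

/-- The Lee–Huang–Yang integral: with
`g(p) = √(p⁴ + 16p²) − 8 − p² + 32/p²`, one has `(1/2)∫_{[0,∞)³} g = 4π·128/15`. -/
theorem lhy_integral :
    (1 / 2) * ∫ z in {z : Fin 3 → ℝ | ∀ i, 0 ≤ z i},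
        (Real.sqrt (nsq z ^ 2 + 16 * nsq z) - 8 - nsq z + 32 / nsq z) =
      4 * Real.pi * (128 / 15) := by
  set g : (Fin 3 → ℝ) → ℝ :=
    fun z => Real.sqrt (nsq z ^ 2 + 16 * nsq z) - 8 - nsq z + 32 / nsq z with hg
  have hnsqm : Measurable nsq := by
    unfold nsq; exact Finset.measurable_sum _ (fun i _ => (measurable_pi_apply i).pow_const 2)
  have hgm : Measurable g := by
    apply Measurable.add
    · exact ((((hnsqm.pow_const 2).add (hnsqm.const_mul 16)).sqrt).sub
        measurable_const).sub hnsqm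
    · exact measurable_const.div hnsqm
  have hmabs : Measurable (fun (z : Fin 3 → ℝ) i => |z i|) :=
    measurable_pi_iff.mpr fun i => (measurable_pi_apply i).abs
  -- step 1: full-space = 8 * octant
  have h1 : ∫ z, g z ∂(Measure.map (fun (z : Fin 3 → ℝ) i => |z i|) volume) = ∫ z, g z := by
    rw [integral_map hmabs.aemeasurable hgm.aestronglyMeasurable]
    refine integral_congr_ae (Filter.Eventually.of_forall fun z => ?_)
    simp [hg, nsq, sq_abs]
  rw [map_abs_pi, integral_smul_measure] at h1
  -- step 2: to Euclidean space
  have h2 : ∫ z, g z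
      = ∫ x : EuclideanSpace ℝ (Fin 3), g ((MeasurableEquiv.toLp 2 (Fin 3 → ℝ)).symm x) :=
    ((EuclideanSpace.volume_preserving_symm_measurableEquiv_toLp (Fin 3)).integral_comp
      (MeasurableEquiv.measurableEmbedding _) g).symm
  have hnorm : ∀ x : EuclideanSpace ℝ (Fin 3),
      nsq ((MeasurableEquiv.toLp 2 (Fin 3 → ℝ)).symm x) = ‖x‖^2 := by
    intro x
    rw [EuclideanSpace.norm_eq, Real.sq_sqrt (by positivity)]
    unfold nsq
    simp only [MeasurableEquiv.coe_toLp_symm, Real.norm_eq_abs, sq_abs]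
  have h3 : (∫ x : EuclideanSpace ℝ (Fin 3), g ((MeasurableEquiv.toLp 2 (Fin 3 → ℝ)).symm x))
      = ∫ x : EuclideanSpace ℝ (Fin 3),
          (fun y : ℝ => Real.sqrt ((y^2) ^ 2 + 16 * (y^2)) - 8 - (y^2) + 32 / (y^2)) ‖x‖ := by
    refine integral_congr_ae (Filter.Eventually.of_forall fun x => ?_)
    simp only [hg, hnorm x]
  have h4 := integral_fun_norm_addHaar (volume : Measure (EuclideanSpace ℝ (Fin 3)))
    (fun y : ℝ => Real.sqrt ((y^2) ^ 2 + 16 * (y^2)) - 8 - (y^2) + 32 / (y^2))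
  rw [finrank_euclideanSpace_fin, measureReal_def, ball_vol] at h4
  rw [radial_value] at h4
  -- assemble
  have hfull : ∫ z, g z = 4 * Real.pi * (2048 / 15) := by
    rw [h2, h3, h4, nsmul_eq_mul, smul_eq_mul]
    push_cast
    ring
  rw [hfull] at h1
  have h8 : ((8:ℝ≥0∞)).toReal = 8 := by simp
  rw [h8, smul_eq_mul] at h1
  linarith [h1]
end
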